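/- arXiv:1008.2638 — 3 statements merged into one kernel-verified Lean document; each statement's English description precedes it below -/
import Mathlib

section
/- Let n be a natural number, N = ⌊(n-1)/2⌋, and for 0 ≤ s ≤ N define C(s,n) = s(n-s-1)(n - 2(N - s + 1)) - 2·Σ_{i=1}^{s-1} i(n-i-1). Then C(s,n) ≥ 0 for all 0 ≤ s ≤ N. -/
/-!
Write `t = N - s ≥ 0` and `r = n - 1 - 2N ≥ 0`. Summing the quadratic `i (n - i - 1)` in closed
form turns `3 C(s, n)` into `s (2s² + 6s(t + r) + 6tr + 3r² + 1)`, a product of nonnegative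
factors.
-/

lemma six_mul_sum_Icc_mul_sub (n m : ℤ) (hm : 0 ≤ m) :
    6 * ∑ i ∈ Finset.Icc 1 m, i * (n - i - 1) = m * (m + 1) * (3 * n - 2 * m - 4) := by
  induction m, hm using Int.leInduction with
  | base => simp
  | succ k hk ih =>
    rw [← Finset.insert_Icc_right_eq_Icc_add_one (by linarith), Finset.sum_insert (by simp),
      mul_add, ih]
    ring

lemma three_mul_coeff_eq (n N s t r : ℤ) (hs : 0 ≤ s) (hN : N = s + t)
    (hn : n = 2 * N + r + 1) :
    3 * (s * (n - s - 1) * (n - 2 * (N - s + 1))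
      - 2 * ∑ i ∈ Finset.Icc 1 (s - 1), i * (n - i - 1))
      = s * (2 * s ^ 2 + 6 * s * (t + r) + 6 * t * r + 3 * r ^ 2 + 1) := by
  subst hN hn
  obtain rfl | hs := hs.eq_or_lt
  · simp
  linear_combination -six_mul_sum_Icc_mul_sub (2 * (s + t) + r + 1) (s - 1) (by omega)

lemma coeff_nonneg (n N s : ℤ) (hs : 0 ≤ s) (hsN : s ≤ N) (hN : 2 * N ≤ n - 1) :
    0 ≤ s * (n - s - 1) * (n - 2 * (N - s + 1))
      - 2 * ∑ i ∈ Finset.Icc 1 (s - 1), i * (n - i - 1) := by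
  obtain ⟨t, ht, rfl⟩ : ∃ t, 0 ≤ t ∧ N = s + t := ⟨N - s, by omega, by ring⟩
  obtain ⟨r, hr, rfl⟩ : ∃ r, 0 ≤ r ∧ n = 2 * (s + t) + r + 1 :=
    ⟨n - 1 - 2 * (s + t), by omega, by ring⟩
  have : 0 ≤ s * (2 * s ^ 2 + 6 * s * (t + r) + 6 * t * r + 3 * r ^ 2 + 1) := by positivity
  linarith [three_mul_coeff_eq _ _ s t r hs rfl rfl]

theorem stmt5 (n s : ℤ) (hs0 : 0 ≤ s) (hs : s ≤ (n - 1) / 2) :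
    0 ≤ s * (n - s - 1) * (n - 2 * ((n - 1) / 2 - s + 1))
      - 2 * ∑ i ∈ Finset.Icc 1 (s - 1), i * (n - i - 1) :=
  coeff_nonneg n _ s hs0 hs (Int.mul_ediv_self_le (by norm_num))
end

section
/- Let n ≥ 1 and consider 2n points placed at the vertices of a regular 2n-gon, colored alternately black and white. Partition the set of 4-element subsets of these points by color pattern: (1) all four the same color; (2) two black and two white alternating around the polygon; (3) three of one color and one of the other; (4) two consecutive points of one color followed by two consecutive points of the other. Then the number of subsets of type (3) is 2n·C(n,3) and the number of subsets of type (4) is n·C(n,3). -/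
/-!
List the points of a 4-subset in increasing order, a₀ < a₁ < a₂ < a₃, and fix its parity
pattern aᵢ = 2xᵢ + pᵢ. Since 2x + p < 2y + q ↔ x < y + (q - p) for parities p, q, where the
truncated difference q - p is 1 exactly at an even-to-odd step, the map
aᵢ ↦ xᵢ + (number of even-to-odd steps before i) is a bijection onto increasing quadruples
in `Fin (n + k)`, where k is the number of even-to-odd steps of the pattern. So a pattern
accounts for C(n + k, 4) subsets. The three-and-one patterns are six with k = 1 and two
with k = 0; the non-alternating two-and-two patterns are three with k = 1 and one with
k = 0. Both totals then follow from 3·C(n + 1, 4) + C(n, 4) = n·C(n, 3).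
-/

open Finset

lemma List.Nodup.card_filter_toFinset {α : Type*} [DecidableEq α] {l : List α} (hl : l.Nodup)
    (p : α → Prop) [DecidablePred p] : #{x ∈ l.toFinset | p x} = (l.filter p).length := by
  rw [card_def, filter_val, List.toFinset_val, hl.dedup, Multiset.filter_coe, Multiset.coe_card]

section IncreasingQuads

variable {α : Type*} [LinearOrder α]

lemma pairwise_lt_of_lt {a b c d : α} (hab : a < b) (hbc : b < c) (hcd : c < d) :
    [a, b, c, d].Pairwise (· < ·) := by
  simp [hab, hbc, hcd, hab.trans hbc, hbc.trans hcd, hab.trans (hbc.trans hcd)]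

lemma sort_toFinset_of_lt {a b c d : α} (hab : a < b) (hbc : b < c) (hcd : c < d) :
    [a, b, c, d].toFinset.sort (· ≤ ·) = [a, b, c, d] :=
  have hlt := pairwise_lt_of_lt hab hbc hcd
  (List.toFinset_sort _ hlt.nodup).2 (hlt.imp le_of_lt)

lemma exists_lt_of_card_eq_four {S : Finset α} (hS : S.card = 4) :
    ∃ a b c d, a < b ∧ b < c ∧ c < d ∧ S.sort (· ≤ ·) = [a, b, c, d] := by
  have hlen : (S.sort (· ≤ ·)).length = 4 := by rw [length_sort, hS]
  have hsorted := S.sortedLT_sort.pairwise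
  match hl : S.sort (· ≤ ·), hlen with
  | [a, b, c, d], _ =>
    rw [hl] at hsorted
    simp only [List.pairwise_cons, List.mem_cons, List.not_mem_nil, or_false, forall_eq_or_imp,
      forall_eq] at hsorted
    exact ⟨a, b, c, d, hsorted.1.1, hsorted.2.1.1, hsorted.2.2.1, rfl⟩

variable (α) [Fintype α]

def increasingQuads : Finset (α × α × α × α) :=
  {t | t.1 < t.2.1 ∧ t.2.1 < t.2.2.1 ∧ t.2.2.1 < t.2.2.2}

variable {α}

@[simp]
lemma mem_increasingQuads {a b c d : α} :
    (a, b, c, d) ∈ increasingQuads α ↔ a < b ∧ b < c ∧ c < d := by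
  simp [increasingQuads]

lemma card_filter_card_eq_four (P : Finset α → Prop) [DecidablePred P] :
    #{S : Finset α | S.card = 4 ∧ P S} =
      #{t ∈ increasingQuads α | P [t.1, t.2.1, t.2.2.1, t.2.2.2].toFinset} := by
  symm
  refine card_bij (fun t _ => [t.1, t.2.1, t.2.2.1, t.2.2.2].toFinset) ?_ ?_ ?_
  · rintro ⟨a, b, c, d⟩ ht
    simp only [mem_filter, mem_increasingQuads, mem_univ, true_and] at ht ⊢
    obtain ⟨⟨hab, hbc, hcd⟩, hP⟩ := ht
    refine ⟨?_, hP⟩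
    rw [← length_sort (· ≤ ·), sort_toFinset_of_lt hab hbc hcd]
    rfl
  · rintro ⟨a, b, c, d⟩ ht ⟨a', b', c', d'⟩ ht' heq
    simp only [mem_filter, mem_increasingQuads] at ht ht'
    obtain ⟨⟨hab, hbc, hcd⟩, -⟩ := ht
    obtain ⟨⟨hab', hbc', hcd'⟩, -⟩ := ht'
    have hsort := (sort_toFinset_of_lt hab hbc hcd).symm.trans
      ((congrArg (·.sort (· ≤ ·)) heq).trans (sort_toFinset_of_lt hab' hbc' hcd'))
    simpa using hsort
  · intro S hS
    simp only [mem_filter, mem_univ, true_and] at hS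
    obtain ⟨a, b, c, d, hab, hbc, hcd, hsort⟩ := exists_lt_of_card_eq_four hS.1
    have hS' : [a, b, c, d].toFinset = S := by rw [← hsort, sort_toFinset]
    exact ⟨(a, b, c, d), by simpa only [mem_filter, mem_increasingQuads, hS'] using
      ⟨⟨hab, hbc, hcd⟩, hS.2⟩, hS'⟩

lemma card_increasingQuads : #(increasingQuads α) = (Fintype.card α).choose 4 := by
  rw [← Fintype.card_finset_len, Fintype.card_subtype]
  simpa using (card_filter_card_eq_four (α := α) fun _ => True).symm

end IncreasingQuads

def parityPattern {m : ℕ} (t : Fin m × Fin m × Fin m × Fin m) : ℕ × ℕ × ℕ × ℕ :=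
  (t.1.val % 2, t.2.1.val % 2, t.2.2.1.val % 2, t.2.2.2.val % 2)

lemma card_filter_parityPattern_eq (n : ℕ) {p q r s : ℕ} (hp : p < 2) (hq : q < 2) (hr : r < 2)
    (hs : s < 2) :
    #{t ∈ increasingQuads (Fin (2 * n)) | parityPattern t = (p, q, r, s)} =
      (n + (q - p) + (r - q) + (s - r)).choose 4 := by
  rw [← Fintype.card_fin (n + (q - p) + (r - q) + (s - r)), ← card_increasingQuads]
  refine card_bij (fun t _ => (⟨t.1 / 2, by omega⟩, ⟨t.2.1 / 2 + (q - p), by omega⟩,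
    ⟨t.2.2.1 / 2 + (q - p) + (r - q), by omega⟩,
    ⟨t.2.2.2 / 2 + (q - p) + (r - q) + (s - r), by omega⟩)) ?_ ?_ ?_
  · rintro ⟨a, b, c, d⟩ ht
    simp only [mem_filter, mem_increasingQuads, parityPattern, Prod.mk.injEq, Fin.lt_def] at ht ⊢
    omega
  · rintro ⟨a, b, c, d⟩ ht ⟨a', b', c', d'⟩ ht' heq
    simp only [mem_filter, mem_increasingQuads, parityPattern, Prod.mk.injEq, Fin.lt_def,
      Fin.ext_iff] at ht ht' heq ⊢
    omega
  · rintro ⟨w, x, y, z⟩ hu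
    simp only [mem_increasingQuads, Fin.lt_def] at hu
    refine ⟨(⟨2 * w + p, by omega⟩, ⟨2 * (x - (q - p)) + q, by omega⟩,
      ⟨2 * (y - (q - p) - (r - q)) + r, by omega⟩,
      ⟨2 * (z - (q - p) - (r - q) - (s - r)) + s, by omega⟩), ?_, ?_⟩
    · simp only [mem_filter, mem_increasingQuads, parityPattern, Prod.mk.injEq, Fin.lt_def]
      omega
    · simp only [Prod.mk.injEq, Fin.ext_iff]
      omega

def oddOneOutPatterns : Finset (ℕ × ℕ × ℕ × ℕ) :=
  {(1, 0, 0, 0), (0, 1, 0, 0), (0, 0, 1, 0), (0, 0, 0, 1),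
   (0, 1, 1, 1), (1, 0, 1, 1), (1, 1, 0, 1), (1, 1, 1, 0)}

/-- The rotations of `(0, 0, 1, 1)`: read cyclically, two consecutive points of one colour
followed by two of the other. -/
def pairedPatterns : Finset (ℕ × ℕ × ℕ × ℕ) :=
  {(0, 0, 1, 1), (0, 1, 1, 0), (1, 0, 0, 1), (1, 1, 0, 0)}

lemma parityPattern_mem_oddOneOutPatterns_iff {m : ℕ} {t : Fin m × Fin m × Fin m × Fin m}
    (ht : t ∈ increasingQuads _) :
    parityPattern t ∈ oddOneOutPatterns ↔
      #{k ∈ [t.1, t.2.1, t.2.2.1, t.2.2.2].toFinset | k.val % 2 = 0} = 3 ∨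
        #{k ∈ [t.1, t.2.1, t.2.2.1, t.2.2.2].toFinset | k.val % 2 = 0} = 1 := by
  obtain ⟨a, b, c, d⟩ := t
  obtain ⟨hab, hbc, hcd⟩ := mem_increasingQuads.1 ht
  rw [(pairwise_lt_of_lt hab hbc hcd).nodup.card_filter_toFinset]
  rcases Nat.mod_two_eq_zero_or_one a.val with ha | ha <;>
  rcases Nat.mod_two_eq_zero_or_one b.val with hb | hb <;>
  rcases Nat.mod_two_eq_zero_or_one c.val with hc | hc <;>
  rcases Nat.mod_two_eq_zero_or_one d.val with hd | hd <;>
  simp [parityPattern, oddOneOutPatterns, ha, hb, hc, hd]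

lemma parityPattern_mem_pairedPatterns_iff {m : ℕ} {t : Fin m × Fin m × Fin m × Fin m}
    (ht : t ∈ increasingQuads _) :
    parityPattern t ∈ pairedPatterns ↔
      #{k ∈ [t.1, t.2.1, t.2.2.1, t.2.2.2].toFinset | k.val % 2 = 0} = 2 ∧
        ¬ ([t.1, t.2.1, t.2.2.1, t.2.2.2].toFinset.sort (· ≤ ·)).IsChain
          (fun x y : Fin m => x.val % 2 ≠ y.val % 2) := by
  obtain ⟨a, b, c, d⟩ := t
  obtain ⟨hab, hbc, hcd⟩ := mem_increasingQuads.1 ht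
  rw [(pairwise_lt_of_lt hab hbc hcd).nodup.card_filter_toFinset, sort_toFinset_of_lt hab hbc hcd]
  rcases Nat.mod_two_eq_zero_or_one a.val with ha | ha <;>
  rcases Nat.mod_two_eq_zero_or_one b.val with hb | hb <;>
  rcases Nat.mod_two_eq_zero_or_one c.val with hc | hc <;>
  rcases Nat.mod_two_eq_zero_or_one d.val with hd | hd <;>
  simp [parityPattern, pairedPatterns, ha, hb, hc, hd]

lemma three_mul_choose_succ_four_add_choose_four (n : ℕ) :
    3 * (n + 1).choose 4 + n.choose 4 = n * n.choose 3 := by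
  have hpascal : (n + 1).choose 4 = n.choose 3 + n.choose 4 := Nat.choose_succ_succ' n 3
  have habsorb : (n + 1) * n.choose 3 = (n + 1).choose 4 * 4 := Nat.add_one_mul_choose_eq n 3
  linarith

theorem stmt14_general (n : ℕ) :
    Nat.card {S : Finset (Fin (2 * n)) // S.card = 4 ∧
        ((S.filter (fun k : Fin (2 * n) => k.val % 2 = 0)).card = 3 ∨
         (S.filter (fun k : Fin (2 * n) => k.val % 2 = 0)).card = 1)} = 2 * n * Nat.choose n 3
    ∧ Nat.card {S : Finset (Fin (2 * n)) // S.card = 4 ∧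
        (S.filter (fun k : Fin (2 * n) => k.val % 2 = 0)).card = 2 ∧
        ¬ (S.sort (· ≤ ·)).Chain' (fun a b : Fin (2 * n) => a.val % 2 ≠ b.val % 2)} =
      n * Nat.choose n 3 := by
  constructor
  · rw [Nat.card_eq_fintype_card, Fintype.card_subtype, card_filter_card_eq_four,
      filter_congr fun _ ht => (parityPattern_mem_oddOneOutPatterns_iff ht).symm,
      ← sum_card_fiberwise_eq_card_filter]
    simp only [oddOneOutPatterns, mem_insert, Prod.mk.injEq, one_ne_zero, zero_ne_one, and_true,
      and_self, and_false, mem_singleton, or_self, not_false_eq_true, sum_insert, Order.lt_two_iff,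
      Std.le_refl, zero_le, card_filter_parityPattern_eq, zero_tsub, add_zero, tsub_self, tsub_zero,
      sum_singleton]
    linarith [three_mul_choose_succ_four_add_choose_four n]
  · simp only [List.Chain']
    rw [Nat.card_eq_fintype_card, Fintype.card_subtype, card_filter_card_eq_four,
      filter_congr fun _ ht => (parityPattern_mem_pairedPatterns_iff ht).symm,
      ← sum_card_fiberwise_eq_card_filter]
    simp only [pairedPatterns, mem_insert, Prod.mk.injEq, zero_ne_one, one_ne_zero, and_false,
      and_self, and_true, mem_singleton, or_self, not_false_eq_true, sum_insert, Order.lt_two_iff,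
      zero_le, Std.le_refl, card_filter_parityPattern_eq, tsub_self, add_zero, tsub_zero, zero_tsub,
      sum_singleton]
    linarith [three_mul_choose_succ_four_add_choose_four n]

/-- Points at the vertices of a regular `2n`-gon are labelled by `Fin (2*n)` in cyclic
order; point `k` is black iff `k` is even.  Type (3) subsets (three of one color, one of
the other) number `2n·C(n,3)`; type (4) subsets (two of each color, but not alternating
in cyclic order around the polygon) number `n·C(n,3)`. -/
theorem stmt14 (n : ℕ) (hn : 1 ≤ n) :
    Nat.card {S : Finset (Fin (2 * n)) // S.card = 4 ∧
        ((S.filter (fun k : Fin (2 * n) => k.val % 2 = 0)).card = 3 ∨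
         (S.filter (fun k : Fin (2 * n) => k.val % 2 = 0)).card = 1)} = 2 * n * Nat.choose n 3
    ∧ Nat.card {S : Finset (Fin (2 * n)) // S.card = 4 ∧
        (S.filter (fun k : Fin (2 * n) => k.val % 2 = 0)).card = 2 ∧
        ¬ (S.sort (· ≤ ·)).Chain' (fun a b : Fin (2 * n) => a.val % 2 ≠ b.val % 2)} =
      n * Nat.choose n 3 :=
  stmt14_general n
end

section
/- Let n ≥ 1 and N = ⌊(n-1)/2⌋. Suppose nonnegative integers x_{i,j} (0 ≤ i ≤ j ≤ N) and y_i (0 ≤ i ≤ N) satisfy y_i = 2x_{i,i} + Σ_{j=0}^{i-1} x_{j,i} + Σ_{j=i+1}^{N} x_{i,j} for each i. Then Σ_{i=0}^{N} Σ_{j=i}^{N} (i(n-j-1) + j(n-i-1)) x_{i,j} = Σ_{i=1}^{N} i(n-i-1) y_i + Σ_{i=0}^{N-1} Σ_{j=i+1}^{N} (j-i)^2 x_{i,j}. -/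
/-!
The left side is a sum over the pairs `i ≤ j` of a weight `c i j` times `x i j`. With
`g i = i (n - i - 1)` one has `c i i = 2 g i` and, for `i < j`, the identity
`c i j = g i + g j + (j - i) ^ 2`. Summing `g i * y i` counts every off-diagonal `x i j` once at
each end, with weight `g i + g j`, and every diagonal `x i i` twice, with weight `2 g i`; what is
left over is exactly the `(j - i) ^ 2` part.
-/

open Finset

section UpperTriangle

variable {M : Type*} [AddCommMonoid M] (N : ℕ) (f : ℕ → ℕ → M)

theorem sum_range_succ_sum_Icc_succ :
    ∑ i ∈ range (N + 1), ∑ j ∈ Icc (i + 1) N, f i j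
      = ∑ i ∈ range N, ∑ j ∈ Icc (i + 1) N, f i j := by
  rw [sum_range_succ, Icc_eq_empty (by omega), sum_empty, add_zero]

theorem sum_range_sum_Icc_eq_diag_add :
    ∑ i ∈ range (N + 1), ∑ j ∈ Icc i N, f i j
      = ∑ i ∈ range (N + 1), f i i + ∑ i ∈ range N, ∑ j ∈ Icc (i + 1) N, f i j := by
  rw [← sum_range_succ_sum_Icc_succ, ← sum_add_distrib]
  refine sum_congr rfl fun i hi => ?_
  rw [Icc_eq_cons_Ioc (by simpa [Nat.lt_succ_iff] using hi), sum_cons, Icc_add_one_left_eq_Ioc]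

theorem sum_range_sum_range_comm :
    ∑ i ∈ range (N + 1), ∑ j ∈ range i, f j i
      = ∑ i ∈ range N, ∑ j ∈ Icc (i + 1) N, f i j := by
  rw [← sum_range_succ_sum_Icc_succ]
  simp only [range_eq_Ico, ← Ico_add_one_right_eq_Icc]
  exact (sum_Ico_Ico_comm' 0 (N + 1) f).symm

end UpperTriangle

theorem sum_mul_endpoint_count {R : Type*} [CommSemiring R] (N : ℕ) (g : ℕ → R)
    (x : ℕ → ℕ → R) :
    ∑ i ∈ range (N + 1),
        g i * (2 * x i i + ∑ j ∈ range i, x j i + ∑ j ∈ Icc (i + 1) N, x i j)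
      = ∑ i ∈ range (N + 1), 2 * g i * x i i
        + ∑ i ∈ range N, ∑ j ∈ Icc (i + 1) N, (g i + g j) * x i j := by
  simp only [mul_add, add_mul, mul_sum, sum_add_distrib, ← mul_assoc, mul_comm (g _) 2]
  rw [sum_range_sum_range_comm N fun j i => g i * x j i, sum_range_succ_sum_Icc_succ, add_assoc,
    add_comm (∑ i ∈ range N, _)]

theorem stmt15_general (n : ℕ) (N : ℕ)
    (x : ℕ → ℕ → ℤ) (y : ℕ → ℤ)
    (h : ∀ i, i ≤ N → y i = 2 * x i i + (∑ j ∈ Finset.range i, x j i)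
        + ∑ j ∈ Finset.Icc (i + 1) N, x i j) :
    ∑ i ∈ Finset.range (N + 1), ∑ j ∈ Finset.Icc i N,
        ((i : ℤ) * ((n : ℤ) - j - 1) + (j : ℤ) * ((n : ℤ) - i - 1)) * x i j
      = (∑ i ∈ Finset.Icc 1 N, (i : ℤ) * ((n : ℤ) - i - 1) * y i)
        + ∑ i ∈ Finset.range N, ∑ j ∈ Finset.Icc (i + 1) N,
            ((j : ℤ) - (i : ℤ)) ^ 2 * x i j := by
  set g : ℕ → ℤ := fun i => i * (n - i - 1)
  have hIcc : ∑ i ∈ Icc 1 N, g i * y i = ∑ i ∈ range (N + 1), g i * y i := by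
    rw [range_eq_Ico, sum_eq_sum_Ico_succ_bot N.succ_pos]
    simp [g, Ico_add_one_right_eq_Icc]
  have hy : ∀ i ∈ range (N + 1), g i * y i
      = g i * (2 * x i i + ∑ j ∈ range i, x j i + ∑ j ∈ Icc (i + 1) N, x i j) :=
    fun i hi => by rw [h i (Nat.lt_succ_iff.mp (mem_range.mp hi))]
  calc _ = ∑ i ∈ range (N + 1), 2 * g i * x i i
        + ∑ i ∈ range N, ∑ j ∈ Icc (i + 1) N,
            ((g i + g j) * x i j + ((j : ℤ) - i) ^ 2 * x i j) := by
        rw [sum_range_sum_Icc_eq_diag_add]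
        congr 1
        · exact sum_congr rfl fun i _ => by ring
        · exact sum_congr rfl fun i _ => sum_congr rfl fun j _ => by ring
    _ = ∑ i ∈ range (N + 1), g i * y i
        + ∑ i ∈ range N, ∑ j ∈ Icc (i + 1) N, ((j : ℤ) - i) ^ 2 * x i j := by
        rw [sum_congr rfl hy, sum_mul_endpoint_count]
        simp only [sum_add_distrib, add_assoc]
    _ = _ := by rw [hIcc]

theorem stmt15 (n : ℕ) (hn : 1 ≤ n) (N : ℕ) (hN : N = (n - 1) / 2)
    (x : ℕ → ℕ → ℤ) (y : ℕ → ℤ)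
    (hx : ∀ i j, 0 ≤ x i j) (hy : ∀ i, 0 ≤ y i)
    (h : ∀ i, i ≤ N → y i = 2 * x i i + (∑ j ∈ Finset.range i, x j i)
        + ∑ j ∈ Finset.Icc (i + 1) N, x i j) :
    ∑ i ∈ Finset.range (N + 1), ∑ j ∈ Finset.Icc i N,
        ((i : ℤ) * ((n : ℤ) - j - 1) + (j : ℤ) * ((n : ℤ) - i - 1)) * x i j
      = (∑ i ∈ Finset.Icc 1 N, (i : ℤ) * ((n : ℤ) - i - 1) * y i)
        + ∑ i ∈ Finset.range N, ∑ j ∈ Finset.Icc (i + 1) N,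
            ((j : ℤ) - (i : ℤ)) ^ 2 * x i j :=
  stmt15_general n N x y h
end
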